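/- arXiv:2505.11301 — 3 statements merged into one kernel-verified Lean document; each statement's English description precedes it below -/
import Mathlib

section
/- Let n be odd, and let f(x) = x^{n+1} + b_1 x^n + ⋯ + b_n x + b_{n+1} be a monic polynomial with coefficients in a field of characteristic 0. Then the characteristic polynomial of the (n+1)×(n+1) matrix B(b_1,…,b_{n+1}) defined below equals f(x). -/
open Polynomial

/-- The matrix `B(b₁, …, b_{n+1})`: it has `1`'s on the superdiagonal and, for
each `1 ≤ k ≤ n+1`, the coefficient `-b_k` is distributed on the `k`-th lower
diagonal (entries `(i,j)` with `i - j = k - 1`, `1`-indexed), near the main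
antidiagonal: as a single entry `-b_k` if it occupies one position and as two
halves `-b_k/2` if it occupies two positions; all other entries are `0`.
(Indices below are `0`-based; `d = i - j` and the `1`-indexed column is `j+1`.) -/
def companionStyleMatrix {K : Type*} [Field K] (n : ℕ) (b : ℕ → K) :
    Matrix (Fin (n + 1)) (Fin (n + 1)) K :=
  fun i j =>
    if (j : ℕ) = (i : ℕ) + 1 then 1
    else if (j : ℕ) ≤ (i : ℕ) then
      let d := (i : ℕ) - (j : ℕ)
      if (d + 1) % 2 = 1 then
        -- k = d + 1 odd: single entry -b_k
        (if 2 * ((j : ℕ) + 1) = n + 1 - d then -b (d + 1) else 0)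
      else if d = n then
        -- bottom-left corner: -b_{n+1}
        -b (n + 1)
      else
        -- k = d + 1 even, k ≠ n+1: two halves -b_k/2
        (if 2 * ((j : ℕ) + 1) = n - d ∨ 2 * ((j : ℕ) + 1) = n + 2 - d
          then -b (d + 1) / 2 else 0)
    else 0

/-!
Since `B` is lower Hessenberg with `1`'s on the superdiagonal, `e₀ Bᵏ` is `e_k` plus a combination
of earlier coordinates, so `e₀` is a cyclic vector and `charpoly B` is the only monic polynomial of
degree `n + 1` killing `e₀`. Writing `e_m B = e_{m+1} + ∑_{j ≤ m} B_{mj} e_j` produces polynomials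
`p_m` with `e₀ p_m(B) = e_m`; in particular `p_{n+1}` is monic of degree `n + 1` and kills `e₀`.

For this `B`, `p_m = X^m` while `2m ≤ n`; afterwards the coefficient of `X^i` (`i < m`) is
`b_{m-i}` with weight `1` if `i + m ≥ n`, `1/2` if `i + m = n - 1`, and `0` otherwise. Passing from
`p_m` to `p_{m+1}` moves the antidiagonal index `i + m` by two, and the weights `1/2, 1, 1/2` of the
entries of `B` on the antidiagonals `n - 2, n - 1, n` are exactly the resulting increments of the
weights `0, 1/2, 1`. In the last step the missing term `b_{n+1}/2 · X⁻¹` of `p_n` is why the corner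
entry carries all of `b_{n+1}`.
-/

namespace Matrix

variable {R : Type*} [CommRing R] {N : ℕ}

def natSingle (N m : ℕ) : Fin N → R := fun j => if (j : ℕ) = m then 1 else 0

theorem natSingle_vecMul_apply (A : Matrix (Fin N) (Fin N) R) {m : ℕ} (hm : m < N)
    (j : Fin N) : (natSingle N m ᵥ* A) j = A ⟨m, hm⟩ j := by
  rw [vecMul, dotProduct, Finset.sum_eq_single ⟨m, hm⟩]
  · simp [natSingle]
  · intro i _ hi
    rw [natSingle, if_neg (fun h => hi (Fin.ext h)), zero_mul]
  · simp

def IsUnitLowerHessenberg (M : Matrix (Fin N) (Fin N) R) : Prop :=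
  ∀ i j : Fin N, (i : ℕ) < j → M i j = if (j : ℕ) = i + 1 then 1 else 0

/-- `succ` is the expansion of the characteristic polynomial of the leading `(m+1) × (m+1)` block
of a lower Hessenberg matrix with unit superdiagonal along its last row. -/
structure IsHessenbergSeq (M : Matrix (Fin N) (Fin N) R) (p : ℕ → R[X]) : Prop where
  zero : p 0 = 1
  succ : ∀ m (hm : m < N),
    p (m + 1) = X * p m - ∑ j ∈ Finset.Iic ⟨m, hm⟩, C (M ⟨m, hm⟩ j) * p j

variable {M : Matrix (Fin N) (Fin N) R}

theorem IsHessenbergSeq.monic_and_natDegree_eq [Nontrivial R] {p : ℕ → R[X]}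
    (hp : M.IsHessenbergSeq p) : ∀ m ≤ N, (p m).Monic ∧ (p m).natDegree = m := by
  intro m
  induction m using Nat.strong_induction_on with
  | _ m ih =>
    intro hmN
    rcases m with _ | m
    · simp [hp.zero]
    have hm : m < N := by omega
    obtain ⟨hmon, hdeg⟩ := ih m (by omega) hm.le
    have hXp : (X * p m).natDegree = m + 1 := by rw [natDegree_X_mul hmon.ne_zero, hdeg]
    have hlow : (∑ j ∈ Finset.Iic (⟨m, hm⟩ : Fin N), C (M ⟨m, hm⟩ j) * p j).natDegree < m + 1 := by
      refine Nat.lt_succ_of_le (natDegree_sum_le_of_forall_le _ _ fun j hj => ?_)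
      have hjm : j ≤ ⟨m, hm⟩ := Finset.mem_Iic.1 hj
      exact (natDegree_C_mul_le _ _).trans
        ((ih j (Nat.lt_succ_of_le hjm) (by omega)).2.trans_le hjm)
    rw [hp.succ m hm, ← hXp]
    exact ⟨(monic_X.mul hmon).sub_of_left (degree_lt_degree (hXp ▸ hlow)),
      natDegree_sub_eq_left_of_natDegree_lt (hXp ▸ hlow)⟩

namespace IsUnitLowerHessenberg

theorem natSingle_vecMul_pow_apply (hM : M.IsUnitLowerHessenberg) (k : ℕ) {j : Fin N}
    (hkj : k ≤ j) : (natSingle N 0 ᵥ* M ^ k) j = natSingle N k j := by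
  induction k generalizing j with
  | zero => rw [pow_zero, vecMul_one]
  | succ k ih =>
    have hk : k < N := by omega
    rw [pow_succ, ← vecMul_vecMul, vecMul, dotProduct, Finset.sum_eq_single ⟨k, hk⟩]
    · rw [ih le_rfl, hM ⟨k, hk⟩ j hkj]
      simp [natSingle]
    · intro i _ hi
      rcases lt_or_ge (i : ℕ) k with hik | hki
      · rw [hM i j (by omega), if_neg (by omega), mul_zero]
      · rw [ih hki, natSingle, if_neg (fun h => hi (Fin.ext h)), zero_mul]
    · simp

theorem natSingle_vecMul_aeval_apply_natDegree (hM : M.IsUnitLowerHessenberg) {g : R[X]}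
    (hg : g.natDegree < N) :
    (natSingle N 0 ᵥ* aeval M g) ⟨g.natDegree, hg⟩ = g.leadingCoeff := by
  rw [aeval_eq_sum_range, vecMul_sum, Finset.sum_apply,
    Finset.sum_eq_single_of_mem g.natDegree (by simp)]
  · rw [vecMul_smul, Pi.smul_apply,
      hM.natSingle_vecMul_pow_apply (j := ⟨g.natDegree, hg⟩) _ le_rfl, natSingle, if_pos rfl, smul_eq_mul, mul_one, coeff_natDegree]
  · intro i hi hne
    rw [vecMul_smul, Pi.smul_apply,
      hM.natSingle_vecMul_pow_apply (j := ⟨g.natDegree, hg⟩) _ (Finset.mem_range_succ_iff.1 hi),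
      natSingle, if_neg (Ne.symm hne), smul_zero]

theorem eq_zero_of_natSingle_vecMul_aeval_eq_zero (hM : M.IsUnitLowerHessenberg) {g : R[X]}
    (hg : g.degree < N) (h : natSingle N 0 ᵥ* aeval M g = 0) : g = 0 := by
  by_contra hne
  have hdeg : g.natDegree < N := (natDegree_lt_iff_degree_lt hne).2 hg
  apply hne
  rw [← leadingCoeff_eq_zero, ← hM.natSingle_vecMul_aeval_apply_natDegree hdeg, h, Pi.zero_apply]

theorem natSingle_vecMul_aeval (hM : M.IsUnitLowerHessenberg) {p : ℕ → R[X]}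
    (hp : M.IsHessenbergSeq p) : ∀ m ≤ N, natSingle N 0 ᵥ* aeval M (p m) = natSingle N m := by
  intro m
  induction m using Nat.strong_induction_on with
  | _ m ih =>
    intro hmN
    rcases m with _ | m
    · rw [hp.zero, map_one, vecMul_one]
    have hm : m < N := by omega
    have hrow : natSingle N 0 ᵥ* aeval M (X * p m) = natSingle N m ᵥ* M := by
      rw [mul_comm, map_mul, aeval_X, ← vecMul_vecMul, ih m (by omega) hm.le]
    have hlower : ∀ j ∈ Finset.Iic (⟨m, hm⟩ : Fin N),
        natSingle N 0 ᵥ* aeval M (C (M ⟨m, hm⟩ j) * p j) = M ⟨m, hm⟩ j • natSingle N j := by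
      intro j hj
      have hjm : j ≤ ⟨m, hm⟩ := Finset.mem_Iic.1 hj
      rw [← smul_eq_C_mul, map_smul, vecMul_smul, ih j (Nat.lt_succ_of_le hjm) (by omega)]
    rw [hp.succ m hm, map_sub, vecMul_sub, hrow, map_sum, vecMul_sum, Finset.sum_congr rfl hlower]
    funext l
    simp only [Pi.sub_apply, Finset.sum_apply, Pi.smul_apply, natSingle_vecMul_apply _ hm,
      natSingle, Fin.val_inj, smul_eq_mul, mul_ite, mul_one, mul_zero, Finset.sum_ite_eq,
      Finset.mem_Iic]
    by_cases hl : (l : ℕ) ≤ m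
    · rw [if_pos (show l ≤ ⟨m, hm⟩ from hl), sub_self, if_neg (by omega)]
    · rw [if_neg (show ¬l ≤ ⟨m, hm⟩ from hl), sub_zero, hM ⟨m, hm⟩ l (show m < (l : ℕ) by omega)]

theorem charpoly_eq [Nontrivial R] (hM : M.IsUnitLowerHessenberg) {p : ℕ → R[X]}
    (hp : M.IsHessenbergSeq p) : M.charpoly = p N := by
  obtain ⟨hmon, hdeg⟩ := hp.monic_and_natDegree_eq N le_rfl
  have hcdeg : M.charpoly.degree = N := by rw [charpoly_degree_eq_dim, Fintype.card_fin]
  refine sub_eq_zero.1 (hM.eq_zero_of_natSingle_vecMul_aeval_eq_zero ?_ ?_)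
  · refine hcdeg ▸ degree_sub_lt_left ?_ M.charpoly_monic.ne_zero ?_
    · rw [hcdeg, degree_eq_natDegree hmon.ne_zero, hdeg]
    · rw [M.charpoly_monic.leadingCoeff, hmon.leadingCoeff]
  · have hann : natSingle N 0 ᵥ* aeval M (p N) = 0 := by
      rw [hM.natSingle_vecMul_aeval hp N le_rfl]
      funext j
      exact if_neg j.isLt.ne
    rw [map_sub, aeval_self_charpoly, zero_sub, vecMul_neg, hann, neg_zero]

end IsUnitLowerHessenberg

end Matrix

section CompanionStyle

variable {K : Type*} [Field K] {n : ℕ} (b : ℕ → K)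

theorem isUnitLowerHessenberg_companionStyleMatrix :
    (companionStyleMatrix n b).IsUnitLowerHessenberg := by
  intro i j h
  unfold companionStyleMatrix
  split_ifs <;> first | rfl | omega

def companionStyleLower (n : ℕ) (b : ℕ → K) (i j : ℕ) : K :=
  if i + j + 1 = n ∨ i - j = n then b (i - j + 1)
  else if i + j = n ∨ i + j + 2 = n then b (i - j + 1) / 2
  else 0

theorem companionStyleMatrix_apply_of_le (hn : Odd n) {i j : Fin (n + 1)} (h : (j : ℕ) ≤ i) :
    companionStyleMatrix n b i j = -companionStyleLower n b i j := by
  obtain ⟨k, hk⟩ := hn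
  have := i.isLt
  unfold companionStyleMatrix companionStyleLower
  dsimp only
  split_ifs <;> first | omega | ring1 | rw [show (i : ℕ) - j = n by omega]

theorem companionStyleLower_eq_zero {i j : ℕ} (hji : j ≤ i) (hi : i ≤ n) (h : n < i + j) :
    companionStyleLower n b i j = 0 := by
  unfold companionStyleLower
  rw [if_neg (by omega), if_neg (by omega)]

def companionStyleCoeff (n : ℕ) (b : ℕ → K) (m i : ℕ) : K :=
  if i = m then 1
  else if i < m ∧ n ≤ i + m then b (m - i)
  else if i < m ∧ i + m + 1 = n then b (m - i) / 2
  else 0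

noncomputable def companionStylePoly (n : ℕ) (b : ℕ → K) (m : ℕ) : K[X] :=
  ∑ i ∈ Finset.range (m + 1), C (companionStyleCoeff n b m i) * X ^ i

theorem coeff_companionStylePoly (m i : ℕ) :
    (companionStylePoly n b m).coeff i = companionStyleCoeff n b m i := by
  simp only [companionStylePoly, finsetSum_coeff, coeff_C_mul_X_pow, Finset.sum_ite_eq,
    Finset.mem_range]
  split_ifs with hi
  · rfl
  · unfold companionStyleCoeff
    rw [if_neg (by omega), if_neg (by omega), if_neg (by omega)]

theorem companionStylePoly_eq_X_pow (hn : Odd n) {m : ℕ} (hm : 2 * m ≤ n) :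
    companionStylePoly n b m = X ^ m := by
  obtain ⟨h, rfl⟩ := hn
  ext i
  rw [coeff_companionStylePoly, coeff_X_pow, companionStyleCoeff,
    if_neg (by omega : ¬(i < m ∧ 2 * h + 1 ≤ i + m)),
    if_neg (by omega : ¬(i < m ∧ i + m + 1 = 2 * h + 1))]

theorem companionStylePoly_succ [NeZero (2 : K)] {m : ℕ} (hm : m ≤ n) :
    companionStylePoly n b (m + 1) =
      X * companionStylePoly n b m + ∑ j ∈ Finset.Iic m, C (companionStyleLower n b m j) * X ^ j := by
  ext i
  simp only [coeff_add, finsetSum_coeff, coeff_C_mul_X_pow, Finset.sum_ite_eq, Finset.mem_Iic,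
    coeff_companionStylePoly]
  rcases i with _ | i
  · rw [coeff_X_mul_zero, if_pos (Nat.zero_le _), zero_add]
    unfold companionStyleCoeff companionStyleLower
    split_ifs <;> first | omega | rfl | simp_all
  · rw [coeff_X_mul, coeff_companionStylePoly]
    unfold companionStyleCoeff companionStyleLower
    rw [Nat.add_sub_add_right]
    have hhalf := add_halves (b (m - i))
    split_ifs <;> first | omega | ring1 |
      (rw [show m - (i + 1) + 1 = m - i by omega]; first | ring1 | linear_combination -hhalf)

theorem isHessenbergSeq_companionStylePoly [NeZero (2 : K)] (hn : Odd n) :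
    (companionStyleMatrix n b).IsHessenbergSeq (companionStylePoly n b) where
  zero := by rw [companionStylePoly_eq_X_pow b hn (Nat.zero_le _), pow_zero]
  succ m hm := by
    have hrow : ∑ j ∈ Finset.Iic (⟨m, hm⟩ : Fin (n + 1)),
        C (companionStyleMatrix n b ⟨m, hm⟩ j) * companionStylePoly n b j =
          -∑ j ∈ Finset.Iic m, C (companionStyleLower n b m j) * X ^ j := by
      rw [show Finset.Iic m = (Finset.Iic (⟨m, hm⟩ : Fin (n + 1))).map Fin.valEmbedding from
        (Fin.map_valEmbedding_Iic (⟨m, hm⟩ : Fin (n + 1))).symm, Finset.sum_map,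
        ← Finset.sum_neg_distrib]
      refine Finset.sum_congr rfl fun j hj => ?_
      have hjm : (j : ℕ) ≤ m := Fin.le_def.1 (Finset.mem_Iic.1 hj)
      rw [Fin.valEmbedding_apply, companionStyleMatrix_apply_of_le b hn hjm, map_neg, neg_mul]
      by_cases hmj : n < m + j
      · rw [companionStyleLower_eq_zero b hjm (by omega) hmj, map_zero, zero_mul, zero_mul]
      · rw [companionStylePoly_eq_X_pow b hn (by omega)]
    rw [companionStylePoly_succ b (by omega), hrow, sub_neg_eq_add]

theorem companionStylePoly_self_add_one :
    companionStylePoly n b (n + 1) =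
      X ^ (n + 1) + ∑ k ∈ Finset.range (n + 1), C (b (k + 1)) * X ^ (n - k) := by
  rw [companionStylePoly, Finset.sum_range_succ, add_comm, ← Finset.sum_range_reflect]
  congr 1
  · simp [companionStyleCoeff]
  · refine Finset.sum_congr rfl fun k hk => ?_
    have := Finset.mem_range.1 hk
    rw [companionStyleCoeff, if_neg (by omega), if_pos (by omega),
      show n + 1 - (n + 1 - 1 - k) = k + 1 by omega, show n + 1 - 1 - k = n - k by omega]

end CompanionStyle

/-- For `n` odd and `f(x) = x^{n+1} + b₁ x^n + ⋯ + b_n x + b_{n+1}` monic with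
coefficients in a field of characteristic zero, the characteristic polynomial
of the `(n+1) × (n+1)` matrix `B(b₁, …, b_{n+1})` equals `f`. -/
theorem charpoly_companionStyleMatrix
    (K : Type*) [Field K] [CharZero K] (n : ℕ) (hn : Odd n) (b : ℕ → K) :
    (companionStyleMatrix n b).charpoly =
      X ^ (n + 1) + ∑ k ∈ Finset.range (n + 1), C (b (k + 1)) * X ^ (n - k) := by
  rw [← companionStylePoly_self_add_one]
  exact (isUnitLowerHessenberg_companionStyleMatrix b).charpoly_eq
    (isHessenbergSeq_companionStylePoly b hn)
end

section
/- Let G be a locally compact, second countable Hausdorff topological group, Γ a discrete subgroup, and let S_1, S_2 be Borel subsets of G such that the quotient map restricted to S_1 is injective into Γ\G and the quotient map restricted to S_2 is surjective onto Γ\G. Then there exists a Borel set F with S_1 ⊆ F ⊆ S_1 ∪ S_2 such that the quotient map restricted to F is a bijection onto Γ\G. -/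
/-!
Since `Γ` is discrete, every point of `G` has a neighbourhood on which the quotient map
`π : G → Γ\G` is injective, and second countability yields a sequence `Uₙ` of such open sets
covering `G`. Enumerate `S₁, U₀ ∩ S₂, U₁ ∩ S₂, …` and keep from the `n`-th set those points whose
orbit misses all earlier sets: every orbit meets `S₁ ∪ S₂`, and it is met exactly once, in the
first set of the list that it meets. The result is Borel because `Γ` is countable, so the
saturation `π⁻¹(π(A)) = ⋃ γ, γA` of a Borel set `A` is Borel.
-/

open Set Topology MulAction

section GreedyTransversal

variable {α β : Type*} (f : α → β) (W : ℕ → Set α)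

def greedyTransversal : Set α := ⋃ n, W n ∩ f ⁻¹' disjointed (fun i => f '' W i) n

variable {f W}

theorem greedyTransversal_subset_iUnion : greedyTransversal f W ⊆ ⋃ n, W n :=
  iUnion_mono fun _ => inter_subset_left

theorem subset_greedyTransversal_zero : W 0 ⊆ greedyTransversal f W := fun x hx =>
  mem_iUnion_of_mem 0 ⟨hx, by rw [mem_preimage, disjointed_zero]; exact mem_image_of_mem f hx⟩

theorem image_greedyTransversal : f '' greedyTransversal f W = f '' ⋃ n, W n := by
  simp only [greedyTransversal, image_iUnion, image_inter_preimage,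
    fun i => inter_eq_right.mpr (disjointed_subset (fun i => f '' W i) i), iUnion_disjointed]

theorem injOn_greedyTransversal (hW : ∀ n, InjOn f (W n)) : InjOn f (greedyTransversal f W) := by
  simp only [InjOn, greedyTransversal, mem_iUnion]
  rintro x ⟨m, hxm, hxD⟩ y ⟨n, hyn, hyD⟩ hxy
  obtain rfl : m = n := by
    by_contra hmn
    exact disjoint_left.mp (disjoint_disjointed _ hmn) (mem_preimage.mp hxD) (hxy ▸ hyD)
  exact hW m hxm hyn hxy

theorem MeasurableSet.greedyTransversal [MeasurableSpace α] [MeasurableSpace β]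
    (hf : Measurable f) (hW : ∀ n, MeasurableSet (W n)) (hfW : ∀ n, MeasurableSet (f '' W n)) :
    MeasurableSet (greedyTransversal f W) :=
  .iUnion fun n => (hW n).inter (hf (.disjointed hfW n))

end GreedyTransversal

theorem TopologicalSpace.exists_seq_isOpen_cover_injOn {α β : Type*} [TopologicalSpace α]
    [SecondCountableTopology α] [Nonempty α] {f : α → β} (hf : ∀ x, ∃ U ∈ 𝓝 x, InjOn f U) :
    ∃ W : ℕ → Set α, (∀ n, IsOpen (W n)) ∧ (⋃ n, W n) = univ ∧ ∀ n, InjOn f (W n) := by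
  choose U hUx hUf using hf
  obtain ⟨t, htc, htU⟩ := countable_cover_nhds fun x => interior_mem_nhds.mpr (hUx x)
  obtain ⟨c, htc⟩ := countable_iff_exists_subset_range.mp htc
  refine ⟨fun n => interior (U (c n)), fun n => isOpen_interior, ?_,
    fun n => (hUf _).mono interior_subset⟩
  refine eq_univ_of_univ_subset (htU ▸ iUnion₂_subset fun x hx => ?_)
  obtain ⟨n, rfl⟩ := htc hx
  exact subset_iUnion (fun n => interior (U (c n))) n

namespace Subgroup

variable {G : Type*} [Group G] (Γ : Subgroup G)

theorem quotient_mk_orbitRel_eq_iff {x y : G} :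
    Quotient.mk (orbitRel Γ G) x = Quotient.mk _ y ↔ ∃ γ ∈ Γ, γ * x = y := by
  rw [eq_comm, Quotient.eq, orbitRel_apply, mem_orbit_iff, Subtype.exists]
  simp only [Subgroup.mk_smul, smul_eq_mul, exists_prop]

theorem mem_image_quotient_mk_iff {s : Set G} {g : G} :
    Quotient.mk (orbitRel Γ G) g ∈ Quotient.mk _ '' s ↔ ∃ γ ∈ Γ, ∃ x ∈ s, γ * x = g := by
  simp only [mem_image, quotient_mk_orbitRel_eq_iff]
  grind

theorem injOn_quotient_mk_iff {s : Set G} :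
    InjOn (Quotient.mk (orbitRel Γ G)) s ↔ ∀ x ∈ s, ∀ y ∈ s, (∃ γ ∈ Γ, γ * x = y) → x = y := by
  simp only [InjOn, quotient_mk_orbitRel_eq_iff]

variable [TopologicalSpace G] [IsTopologicalGroup G] [DiscreteTopology Γ]

theorem exists_mem_nhds_injOn_quotient_mk (g : G) :
    ∃ U ∈ 𝓝 g, InjOn (Quotient.mk (orbitRel Γ G)) U := by
  obtain ⟨V, hV, hVΓ⟩ := nhds_inter_eq_singleton_of_mem_discrete
    (isDiscrete_iff_discreteTopology.mpr ‹_›) Γ.one_mem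
  obtain ⟨U, hU, hUV⟩ := exists_nhds_split_inv hV
  refine ⟨(· * g⁻¹) ⁻¹' U, (continuous_mul_const g⁻¹).continuousAt.preimage_mem_nhds
    (by rwa [mul_inv_cancel]), fun x hx y hy hxy => ?_⟩
  obtain ⟨γ, hγ, rfl⟩ := Γ.quotient_mk_orbitRel_eq_iff.mp hxy
  have : γ ∈ V ∩ Γ := ⟨by simpa [div_eq_mul_inv, mul_assoc] using hUV _ hy _ hx, hγ⟩
  rw [hVΓ, mem_singleton_iff] at this
  rw [this, one_mul]

theorem measurableSet_image_quotient_mk [SecondCountableTopology G] [MeasurableSpace G]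
    [BorelSpace G] {s : Set G} (hs : MeasurableSet s) :
    MeasurableSet (Quotient.mk (orbitRel Γ G) '' s) := by
  have : Countable Γ := TopologicalSpace.separableSpace_iff_countable.mp inferInstance
  rw [measurableSet_quotient]
  convert MeasurableSet.iUnion fun γ : Γ => hs.const_smul (γ : G)
  exact quotient_preimage_image_eq_union_mul s

end Subgroup

theorem exists_borel_fundamental_domain_between_general
    (G : Type*) [Group G] [TopologicalSpace G] [IsTopologicalGroup G]
    [SecondCountableTopology G]
    [MeasurableSpace G] [BorelSpace G]
    (Γ : Subgroup G) [DiscreteTopology Γ]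
    (S₁ S₂ : Set G) (hS₁m : MeasurableSet S₁) (hS₂m : MeasurableSet S₂)
    (hinj : ∀ x ∈ S₁, ∀ y ∈ S₁, (∃ γ ∈ Γ, γ * x = y) → x = y)
    (hsurj : ∀ g : G, ∃ γ ∈ Γ, ∃ s ∈ S₂, γ * s = g) :
    ∃ F : Set G, MeasurableSet F ∧ S₁ ⊆ F ∧ F ⊆ S₁ ∪ S₂ ∧
      (∀ g : G, ∃ γ ∈ Γ, ∃ f ∈ F, γ * f = g) ∧
      (∀ f₁ ∈ F, ∀ f₂ ∈ F, (∃ γ ∈ Γ, γ * f₁ = f₂) → f₁ = f₂) := by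
  obtain ⟨U, hU_open, hU_cover, hU_inj⟩ :=
    TopologicalSpace.exists_seq_isOpen_cover_injOn Γ.exists_mem_nhds_injOn_quotient_mk
  let W : ℕ → Set G := fun | 0 => S₁ | n + 1 => U n ∩ S₂
  have hW_meas : ∀ n, MeasurableSet (W n)
    | 0 => hS₁m
    | n + 1 => (hU_open n).measurableSet.inter hS₂m
  have hW_inj : ∀ n, InjOn (Quotient.mk (orbitRel Γ G)) (W n)
    | 0 => Γ.injOn_quotient_mk_iff.mpr hinj
    | n + 1 => (hU_inj n).mono inter_subset_left
  have hW_sub : ⋃ n, W n ⊆ S₁ ∪ S₂ := iUnion_subset fun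
    | 0 => subset_union_left
    | n + 1 => inter_subset_right.trans subset_union_right
  have hS₂_sub : S₂ ⊆ ⋃ n, W n := fun x hx => by
    obtain ⟨n, hxn⟩ := mem_iUnion.mp (hU_cover.symm ▸ mem_univ x : x ∈ ⋃ n, U n)
    exact mem_iUnion_of_mem (n + 1) ⟨hxn, hx⟩
  refine ⟨greedyTransversal (Quotient.mk _) W,
    .greedyTransversal measurable_quotient_mk'' hW_meas
      fun n => Γ.measurableSet_image_quotient_mk (hW_meas n),
    subset_greedyTransversal_zero (W := W), greedyTransversal_subset_iUnion.trans hW_sub,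
    fun g => ?_, Γ.injOn_quotient_mk_iff.mp (injOn_greedyTransversal hW_inj)⟩
  rw [← Γ.mem_image_quotient_mk_iff, image_greedyTransversal]
  exact image_mono hS₂_sub (Γ.mem_image_quotient_mk_iff.mpr (hsurj g))

/-- Let `G` be a locally compact, second countable Hausdorff topological group,
`Γ` a discrete subgroup, and `S₁, S₂` Borel subsets of `G` such that the
quotient map `G → Γ\G` is injective on `S₁` and surjective from `S₂`.  Then
there is a Borel set `F` with `S₁ ⊆ F ⊆ S₁ ∪ S₂` mapping bijectively onto
`Γ\G`: every left `Γ`-orbit meets `F` exactly once. -/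
theorem exists_borel_fundamental_domain_between
    (G : Type*) [Group G] [TopologicalSpace G] [IsTopologicalGroup G]
    [LocallyCompactSpace G] [SecondCountableTopology G] [T2Space G]
    [MeasurableSpace G] [BorelSpace G]
    (Γ : Subgroup G) [DiscreteTopology Γ]
    (S₁ S₂ : Set G) (hS₁m : MeasurableSet S₁) (hS₂m : MeasurableSet S₂)
    (hinj : ∀ x ∈ S₁, ∀ y ∈ S₁, (∃ γ ∈ Γ, γ * x = y) → x = y)
    (hsurj : ∀ g : G, ∃ γ ∈ Γ, ∃ s ∈ S₂, γ * s = g) :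
    ∃ F : Set G, MeasurableSet F ∧ S₁ ⊆ F ∧ F ⊆ S₁ ∪ S₂ ∧
      (∀ g : G, ∃ γ ∈ Γ, ∃ f ∈ F, γ * f = g) ∧
      (∀ f₁ ∈ F, ∀ f₂ ∈ F, (∃ γ ∈ Γ, γ * f₁ = f₂) → f₁ = f₂) :=
  exists_borel_fundamental_domain_between_general G Γ S₁ S₂ hS₁m hS₂m hinj hsurj
end

section
/- Let F be a number field, O_F its ring of integers, and O_F^× its unit group. Let w_F ⊂ O_F^× be the roots of unity. There exists a compact subset Λ of F_∞^1 (the norm-one hypersurface of F_∞ = ∏_{v|∞} F_v) such that F_∞^1 = Λ · O_F^×, i.e. every element of F_∞^1 can be written as a product of an element of Λ and a unit of O_F. -/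
open NumberField

/-!
Dirichlet's unit theorem makes the fundamental cone of `F_∞` a fundamental domain for the action
of `O_F^×` modulo torsion, and its part of norm at most one is bounded. So the closure of the
norm-one slice of the fundamental cone is compact, stays on the norm-one hypersurface, and meets
every unit orbit in it.
-/

namespace NumberField.mixedEmbedding

variable {F : Type*} [Field F]

theorem eq_unitSMul_mul_inv (u : (𝓞 F)ˣ) (x : mixedSpace F) :
    x = u • x * mixedEmbedding F ((u⁻¹ : (𝓞 F)ˣ) : 𝓞 F) := by
  rw [unitSMul_smul, mul_comm (mixedEmbedding F _) x, mul_assoc, ← map_mul,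
    ← RingOfIntegers.coe_eq_algebraMap]
  norm_cast
  simp

variable [NumberField F]

variable (F) in
theorem isCompact_closure_fundamentalCone_inter_norm_eq_one :
    IsCompact (closure (fundamentalCone F ∩ {x | mixedEmbedding.norm x = 1})) := by
  -- the metric on `mixedSpace F` is only found once `IsReal` is decidable
  classical
  exact ((fundamentalCone.isBounded_normLeOne F).subset
    (Set.inter_subset_inter_right _ fun _ ↦ le_of_eq)).isCompact_closure

theorem exists_unit_smul_mem_fundamentalCone_inter_norm_eq_one {x : mixedSpace F}
    (hx : mixedEmbedding.norm x = 1) :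
    ∃ u : (𝓞 F)ˣ, u • x ∈ fundamentalCone F ∩ {x | mixedEmbedding.norm x = 1} := by
  obtain ⟨u, hu⟩ := fundamentalCone.exists_unit_smul_mem (x := x) (by simp [hx])
  exact ⟨u, hu, (norm_unit_smul u x).trans hx⟩

end NumberField.mixedEmbedding

open NumberField.mixedEmbedding

/-- Let `F` be a number field.  There is a compact subset `Λ` of the norm-one
hypersurface `F_∞^1 = {x ∈ F_∞ : ∏_v |x_v|_v = 1}` of
`F_∞ = ∏_{v | ∞} F_v` (modelled by the mixed space
`({w real} → ℝ) × ({w complex} → ℂ)` with the norm `∏|x_w|·∏‖x_w‖²`) such that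
`F_∞^1 = Λ · O_F^×`: every element of `F_∞^1` is the product of an element of
`Λ` and (the image of) a unit of `O_F`. -/
theorem exists_compact_norm_one_fundamental_set
    (F : Type*) [Field F] [NumberField F] :
    ∃ Λ : Set (NumberField.mixedEmbedding.mixedSpace F),
      IsCompact Λ ∧
      Λ ⊆ {x | NumberField.mixedEmbedding.norm x = 1} ∧
      ∀ x : NumberField.mixedEmbedding.mixedSpace F,
        NumberField.mixedEmbedding.norm x = 1 →
        ∃ l ∈ Λ, ∃ u : (𝓞 F)ˣ,
          x = l * NumberField.mixedEmbedding F (u : 𝓞 F) := by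
  refine ⟨closure (fundamentalCone F ∩ {x | mixedEmbedding.norm x = 1}),
    isCompact_closure_fundamentalCone_inter_norm_eq_one F,
    closure_minimal Set.inter_subset_right
      (isClosed_eq (mixedEmbedding.continuous_norm F) continuous_const), fun x hx ↦ ?_⟩
  obtain ⟨u, hu⟩ := exists_unit_smul_mem_fundamentalCone_inter_norm_eq_one hx
  exact ⟨u • x, subset_closure hu, u⁻¹, eq_unitSMul_mul_inv u x⟩
end
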